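/- arXiv:1107.4387 — 2 statements merged into one kernel-verified Lean document; each statement's English description precedes it below -/
import Mathlib

section
/- Let G be a finite cyclic group of order n written additively, let r divide n, let H be the subgroup of G of order n/r, and let N ∈ G. Then there exists a coset S of H such that for every integer k with 1 ≤ k < ⌈r/3⌉ and every choice of 3k elements P₁, …, P_{3k} ∈ S, the sum P₁ + ⋯ + P_{3k} is not equal to k·N. -/
/-!
Write `G = ℤσ`, `N = νσ`, and take the coset `S = aσ + H`. Since `H` is the subgroup of order
`n / r`, an element `xσ` lies in `H` only if `r ∣ x`. If `P₁, …, P_{3k} ∈ S` sum to `kN`, then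
`kN - 3k·aσ = k(ν - 3a)σ ∈ H`, so `r ∣ k(ν - 3a)`. It therefore suffices to pick `a` so that
`c = ν - 3a` has `gcd(r, c) ∣ 3`, for then `r ∣ 3k`, which is impossible when `3k < r`. If `3 ∣ ν`
take `c = 3`; otherwise `c` can be chosen coprime to `r` because units of `ℤ/3r` surject onto
units of `ℤ/3`.
-/

theorem ZMod.exists_intModEq_isCoprime {d m : ℕ} [NeZero m] (hdm : d ∣ m) {ν : ℤ}
    (hν : IsCoprime (d : ℤ) ν) : ∃ c : ℤ, c ≡ ν [ZMOD d] ∧ IsCoprime (m : ℤ) c := by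
  obtain ⟨w, hw⟩ := unitsMap_surjective hdm ((coe_int_isUnit_iff_isCoprime ν d).mpr hν).unit
  refine ⟨(w : ZMod m).val, ?_, ?_⟩
  · rw [← intCast_eq_intCast_iff, Int.cast_natCast, natCast_val, ← unitsMap_val hdm, hw,
      IsUnit.unit_spec]
  · rw [← coe_int_isUnit_iff_isCoprime, Int.cast_natCast, natCast_zmod_val]
    exact w.isUnit

theorem exists_intModEq_three_gcd_dvd_three {r : ℕ} (hr : r ≠ 0) (ν : ℤ) :
    ∃ c : ℤ, c ≡ ν [ZMOD 3] ∧ gcd (r : ℤ) c ∣ 3 := by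
  by_cases h3ν : (3 : ℤ) ∣ ν
  · exact ⟨3, Int.modEq_iff_dvd.mpr (dvd_sub h3ν dvd_rfl), gcd_dvd_right _ _⟩
  · have : NeZero (3 * r) := ⟨by omega⟩
    obtain ⟨c, hcν, hc⟩ := ZMod.exists_intModEq_isCoprime (dvd_mul_right 3 r)
      (Int.prime_three.coprime_iff_not_dvd.mpr h3ν)
    push_cast at hc
    refine ⟨c, hcν, ?_⟩
    rw [← Int.coe_gcd, Int.isCoprime_iff_gcd_eq_one.mp hc.of_mul_left_right]
    exact one_dvd 3

theorem exists_forall_not_dvd_mul_sub_three_mul {r : ℕ} (hr : r ≠ 0) (ν : ℤ) :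
    ∃ a : ℤ, ∀ k : ℕ, 0 < k → 3 * k < r → ¬ (r : ℤ) ∣ k * (ν - 3 * a) := by
  obtain ⟨c, hcν, hgcd⟩ := exists_intModEq_three_gcd_dvd_three hr ν
  obtain ⟨a, ha⟩ := hcν.dvd
  refine ⟨a, fun k hk hkr hdvd => ?_⟩
  rw [show ν - 3 * a = c by linarith, mul_comm] at hdvd
  have h3k : (r : ℤ) ∣ 3 * k :=
    (dvd_gcd_mul_iff_dvd_mul.mpr hdvd).trans (mul_dvd_mul_right hgcd _)
  have := Int.le_of_dvd (by positivity) h3k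
  omega

theorem AddSubgroup.dvd_of_zsmul_mem {G : Type*} [AddGroup G] {σ : G} {H : AddSubgroup G}
    {r m : ℕ} (hσ : addOrderOf σ = r * m) (hH : Nat.card H = m) (hm : m ≠ 0) {x : ℤ}
    (hx : x • σ ∈ H) : (r : ℤ) ∣ x := by
  have hkill : m • (x • σ) = 0 := by
    rw [← hH]
    exact congrArg Subtype.val (card_nsmul_eq_zero' (G := H) (x := ⟨_, hx⟩))
  rw [← natCast_zsmul, smul_smul] at hkill
  have := addOrderOf_dvd_iff_zsmul_eq_zero.mpr hkill
  rw [hσ, Nat.cast_mul, mul_comm (r : ℤ)] at this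
  exact (mul_dvd_mul_iff_left (by exact_mod_cast hm)).mp this

theorem stmt_6 (G : Type*) [AddCommGroup G] [Fintype G] [IsAddCyclic G]
    (n r : ℕ) (hn : Fintype.card G = n) (hr : r ∣ n) (hr0 : 0 < r)
    (H : AddSubgroup G) (hH : Nat.card H = n / r) (N : G) :
    ∃ g : G, ∀ k : ℕ, 1 ≤ k → k < (r + 2) / 3 →
      ∀ P : Fin (3 * k) → G, (∀ i, P i - g ∈ H) →
        (∑ i, P i) ≠ k • N := by
  obtain ⟨σ, hσ⟩ := IsAddCyclic.exists_generator (α := G)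
  obtain ⟨ν, hν⟩ := AddSubgroup.mem_zmultiples_iff.mp (hσ N)
  have hord : addOrderOf σ = r * (n / r) := by
    rw [addOrderOf_eq_card_of_forall_mem_zmultiples hσ, Nat.card_eq_fintype_card, hn,
      Nat.mul_div_cancel' hr]
  have hm : n / r ≠ 0 :=
    (Nat.div_pos (Nat.le_of_dvd (hn ▸ Fintype.card_pos) hr) hr0).ne'
  obtain ⟨a, ha⟩ := exists_forall_not_dvd_mul_sub_three_mul hr0.ne' ν
  refine ⟨a • σ, fun k hk hkr P hP hsum => ha k hk (by omega) ?_⟩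
  have hdiff : ∑ i, (P i - a • σ) = ((k : ℤ) * (ν - 3 * a)) • σ := by
    rw [Finset.sum_sub_distrib, hsum, Finset.sum_const, Finset.card_univ, Fintype.card_fin, ← hν]
    module
  exact AddSubgroup.dvd_of_zsmul_mem hord hH hm (hdiff ▸ H.sum_mem fun i _ => hP i)
end

section
/- Let G be a finite abelian group and H a subgroup such that the quotient G/H is cyclic of order r. Let N ∈ G. Then there exists a coset S of H in G such that for every integer k with 1 ≤ k < ⌈r/3⌉, no sum of 3k elements of S equals k·N. -/
/-! If `x` generates `G ⧸ H` and `N ↦ m • x`, take the coset `S ↦ t • x` with `3 t = m + j`,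
`1 ≤ j ≤ 3`. A sum of `3k` elements of `S` then maps to `k • N + (k j) • x`, and `(k j) • x ≠ 0`
because `0 < k j ≤ 3k < r = addOrderOf x`. -/

theorem IsAddCyclic.exists_nsmul_mul_ne_nsmul {Q : Type*} [AddGroup Q] [IsAddCyclic Q]
    {n : ℕ} (hn : 0 < n) (y : Q) :
    ∃ z : Q, ∀ k : ℕ, 0 < k → n * k < Nat.card Q → (n * k) • z ≠ k • y := by
  obtain ⟨x, hx⟩ := IsAddCyclic.exists_generator (α := Q)
  obtain ⟨m, rfl⟩ := AddSubgroup.mem_zmultiples_iff.mp (hx y)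
  set j : ℤ := n - m % n
  have hj : n * (m / n + 1) = m + j := by linear_combination Int.emod_add_mul_ediv m n
  have hj_pos : 0 < j := by have := Int.emod_lt_of_pos m (by omega : (0 : ℤ) < n); omega
  have hj_le : j ≤ n := by have := Int.emod_nonneg m (by omega : (n : ℤ) ≠ 0); omega
  refine ⟨(m / n + 1) • x, fun k hk hkr heq => ?_⟩
  have hkj : (k * j) • x = 0 := by
    have hcoef : (k * j : ℤ) = ((n * k : ℕ) : ℤ) * (m / n + 1) - k * m := by
      push_cast
      linear_combination -(k : ℤ) * hj
    rw [hcoef, sub_zsmul, mul_zsmul, mul_zsmul, natCast_zsmul, natCast_zsmul, heq, add_neg_cancel]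
  have hdvd := addOrderOf_dvd_iff_zsmul_eq_zero.mpr hkj
  rw [addOrderOf_eq_card_of_forall_mem_zmultiples hx] at hdvd
  have hle := Int.le_of_dvd (by positivity) hdvd
  have : (k : ℤ) * j ≤ k * n := by gcongr
  linarith

theorem QuotientAddGroup.mk_sum_of_sub_mem {G ι : Type*} [AddCommGroup G] [Fintype ι]
    {H : AddSubgroup G} {g : G} {P : ι → G} (hP : ∀ i, P i - g ∈ H) :
    ((∑ i, P i : G) : G ⧸ H) = Fintype.card ι • (g : G ⧸ H) := by
  rw [← QuotientAddGroup.mk'_apply, map_sum]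
  simp only [QuotientAddGroup.mk'_apply, (QuotientAddGroup.eq_iff_sub_mem).mpr (hP _),
    Finset.sum_const, Finset.card_univ]

theorem stmt_7_general (G : Type*) [AddCommGroup G]
    (H : AddSubgroup G) (r : ℕ) (hr : Nat.card (G ⧸ H) = r)
    (hcyc : IsAddCyclic (G ⧸ H)) (N : G) :
    ∃ g : G, ∀ k : ℕ, 1 ≤ k → k < (r + 2) / 3 →
      ∀ P : Fin (3 * k) → G, (∀ i, P i - g ∈ H) →
        (∑ i, P i) ≠ k • N := by
  obtain ⟨z, hz⟩ := IsAddCyclic.exists_nsmul_mul_ne_nsmul three_pos (N : G ⧸ H)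
  obtain ⟨g, rfl⟩ := QuotientAddGroup.mk_surjective z
  refine ⟨g, fun k hk hkr P hP hsum => hz k hk (by omega) ?_⟩
  have hmk := QuotientAddGroup.mk_sum_of_sub_mem (H := H) hP
  rwa [hsum, Fintype.card_fin, QuotientAddGroup.mk_nsmul, eq_comm] at hmk

theorem stmt_7 (G : Type*) [AddCommGroup G] [Fintype G]
    (H : AddSubgroup G) (r : ℕ) (hr : Nat.card (G ⧸ H) = r)
    (hcyc : IsAddCyclic (G ⧸ H)) (N : G) :
    ∃ g : G, ∀ k : ℕ, 1 ≤ k → k < (r + 2) / 3 →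
      ∀ P : Fin (3 * k) → G, (∀ i, P i - g ∈ H) →
        (∑ i, P i) ≠ k • N :=
  stmt_7_general G H r hr hcyc N
end
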